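/- If 𝔏 is a left-resolving, λ-synchronizing λ-graph system presenting a subshift Λ and Λ is irreducible, then 𝔏 is ι-irreducible. -/

import Mathlib

open List

variable {A : Type*}

/-- A subshift: a closed, shift-invariant subset of `A^ℤ` (with `A` discrete). -/
def IsSubshift [TopologicalSpace A] (Λ : Set (ℤ → A)) : Prop :=
  IsClosed Λ ∧ (∀ x ∈ Λ, (fun i => x (i + 1)) ∈ Λ) ∧ (∀ x ∈ Λ, (fun i => x (i - 1)) ∈ Λ)

/-- `w` is an admissible word of `Λ`, i.e. `w ∈ B_*(Λ)`. -/
def Adm (Λ : Set (ℤ → A)) (w : List A) : Prop :=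
  ∃ x ∈ Λ, ∃ n : ℤ, ∀ i : Fin w.length, x (n + (i : ℕ)) = w.get i

/-- `Γ_l^-(μ)`: the set of admissible words `ν` of length `l` with `νμ` admissible. -/
def Gamma (Λ : Set (ℤ → A)) (l : ℕ) (μ : List A) : Set (List A) :=
  {ν | ν.length = l ∧ Adm Λ ν ∧ Adm Λ (ν ++ μ)}

/-- `μ` is an `l`-synchronizing word of `Λ`: `Γ_l^-(μ) = Γ_l^-(μω)` for all
`ω ∈ Γ_*^+(μ)`.  Membership in `S_l(Λ)`. -/
def LSync (Λ : Set (ℤ → A)) (l : ℕ) (μ : List A) : Prop :=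
  Adm Λ μ ∧ ∀ ω : List A, Adm Λ (μ ++ ω) → Gamma Λ l μ = Gamma Λ l (μ ++ ω)

/-- `ω` is an intrinsically synchronizing word of `Λ`. -/
def IntrSync (Λ : Set (ℤ → A)) (ω : List A) : Prop :=
  Adm Λ ω ∧ ∀ μ ν : List A, Adm Λ μ → Adm Λ ν → Adm Λ (μ ++ ω) → Adm Λ (ω ++ ν) →
    Adm Λ (μ ++ ω ++ ν)

/-- Irreducibility of the subshift `Λ`. -/
def IrredShift (Λ : Set (ℤ → A)) : Prop :=
  ∀ μ ν : List A, Adm Λ μ → Adm Λ ν → ∃ ξ : List A, Adm Λ (μ ++ ξ ++ ν)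

/-- `Λ` is `λ`-synchronizing: it is irreducible and for every `η ∈ B_l(Λ)` and `k ≥ l`
there is `ν ∈ S_k(Λ)` with `ην ∈ S_{k-l}(Λ)`. -/
def LambdaSync (Λ : Set (ℤ → A)) : Prop :=
  IrredShift Λ ∧ ∀ (η : List A) (k : ℕ), Adm Λ η → η.length ≤ k →
    ∃ ν : List A, LSync Λ k ν ∧ LSync Λ (k - η.length) (η ++ ν)

/-- A `λ`-graph system over the alphabet `A`: a labeled Bratteli diagram with
finite vertex sets `V l` and edge sets `E l` (edges from level `l` to level `l+1`),
a labeling, and surjective `ι`-maps, satisfying the local property (stated as a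
label-wise counting identity, i.e. a label-preserving bijection), such that every
vertex has a successor and every vertex at level `l+1` has a predecessor. -/
structure LGS (A : Type*) where
  V : ℕ → Type*
  E : ℕ → Type*
  finV : ∀ l, Finite (V l)
  finE : ∀ l, Finite (E l)
  src : ∀ l, E l → V l
  tgt : ∀ l, E l → V (l + 1)
  lab : ∀ l, E l → A
  iota : ∀ l, V (l + 1) → V l
  iota_surj : ∀ l, Function.Surjective (iota l)
  succ : ∀ (l : ℕ) (v : V l), ∃ e : E l, src l e = v
  pred : ∀ (l : ℕ) (v : V (l + 1)), ∃ e : E l, tgt l e = v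
  local_property : ∀ (l : ℕ) (u : V l) (v : V (l + 2)) (α : A),
    Nat.card {e : E (l + 1) //
        tgt (l + 1) e = v ∧ iota l (src (l + 1) e) = u ∧ lab (l + 1) e = α}
      = Nat.card {e : E l //
        src l e = u ∧ tgt l e = iota (l + 1) v ∧ lab l e = α}

namespace LGS

variable {A : Type*}

/-- There is a labeled path in `G` starting at `v : V l`, labeled `w`, ending at `u : V l'`. -/
def PathW (G : LGS A) : ∀ (l : ℕ), G.V l → List A → ∀ (l' : ℕ), G.V l' → Prop
  | l, v, [], l', u => ∃ h : l = l', h ▸ v = u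
  | l, v, a :: w, l', u =>
      ∃ e : G.E l, G.src l e = v ∧ G.lab l e = a ∧ G.PathW (l + 1) (G.tgt l e) w l' u

/-- `G` presents the subshift `Λ`: the admissible words of `Λ` are exactly the labels of
finite labeled paths appearing somewhere in `G`. -/
def Presents (G : LGS A) (Λ : Set (ℤ → A)) : Prop :=
  ∀ w : List A, Adm Λ w ↔ ∃ (l : ℕ) (v : G.V l) (l' : ℕ) (u : G.V l'), G.PathW l v w l' u

/-- Iterated `ι`-map `ι^n : V (l+n) → V l`. -/
def iotaN (G : LGS A) : ∀ (l n : ℕ), G.V (l + n) → G.V l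
  | _, 0, v => v
  | l, n + 1, v => G.iotaN l n (G.iota (l + n) v)

/-- `G` is left-resolving: edges carrying the same label have distinct terminal vertices. -/
def LeftResolving (G : LGS A) : Prop :=
  ∀ (l : ℕ) (e f : G.E l), G.lab l e = G.lab l f → G.tgt l e = G.tgt l f → e = f

/-- The predecessor set `Γ_l^-(v)` of a vertex `v ∈ V l`: the words of length `l`
labeling paths from level `0` to `v`. -/
def PredSet (G : LGS A) (l : ℕ) (v : G.V l) : Set (List A) :=
  {w | w.length = l ∧ ∃ v0 : G.V 0, G.PathW 0 v0 w l v}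

/-- `G` is predecessor-separated. -/
def PredSeparated (G : LGS A) : Prop :=
  ∀ (l : ℕ) (u v : G.V l), G.PredSet l u = G.PredSet l v → u = v

/-- The word `w` leaves the vertex `v`. -/
def Leaves (G : LGS A) (l : ℕ) (v : G.V l) (w : List A) : Prop :=
  ∃ (l' : ℕ) (u : G.V l'), G.PathW l v w l' u

/-- The vertex `v ∈ V l` launches the word `w`: `w` leaves `v` and no other vertex of `V l`. -/
def Launches (G : LGS A) (l : ℕ) (v : G.V l) (w : List A) : Prop :=
  G.Leaves l v w ∧ ∀ v' : G.V l, G.Leaves l v' w → v' = v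

/-- `G` is a `λ`-synchronizing `λ`-graph system: every vertex launches some word. -/
def LambdaSyncSys (G : LGS A) : Prop :=
  ∀ (l : ℕ) (v : G.V l), ∃ w : List A, G.Launches l v w

/-- `G` is `ι`-irreducible. -/
def IotaIrred (G : LGS A) : Prop :=
  ∀ (l : ℕ) (v u : G.V l) (w : List A) (l' : ℕ) (t : G.V l'),
    G.PathW l u w l' t →
    ∃ (n : ℕ) (ξ : List A) (u' : G.V (l + n)) (t' : G.V (l' + n)),
      G.PathW l v ξ (l + n) u' ∧ G.iotaN l n u' = u ∧
      G.PathW (l + n) u' w (l' + n) t' ∧ G.iotaN l' n t' = t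

end LGS

/-! A synchronizing word `η` launched by `v`, followed by a connecting word `ξ` from the
irreducibility of `Λ`, followed by `w` and a word `ν` launched by `t`, is admissible, so it labels
a path of `G`. The local property of a λ-graph system lets us move paths between levels along
`ι`, so this path may be taken to start at level `l`; it then starts at `v` because `v` launches
`η`. Its `w`-segment runs from some `u'` to some `t'` at level `l + n`, where `n = |ηξ|`, and
pushing the remaining segment down by `ι^n` shows that `ι^n t'` leaves `ν`, hence `ι^n t' = t`.
Pushing the `w`-segment down gives a path labeled `w` from `ι^n u'` to `t`, so `ι^n u' = u`
because `G` is left-resolving. -/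

namespace LGS

variable {G : LGS A}

theorem PathW.length_eq {w : List A} :
    ∀ {l l' : ℕ} {v : G.V l} {u : G.V l'}, G.PathW l v w l' u → l' = l + w.length := by
  induction w with
  | nil => rintro l l' v u ⟨rfl, -⟩; rfl
  | cons a w ih =>
      rintro l l' v u ⟨e, -, -, hp⟩
      rw [ih hp, List.length_cons]
      omega

theorem pathW_append_iff {w₁ w₂ : List A} :
    ∀ {l l' : ℕ} {v : G.V l} {u : G.V l'}, G.PathW l v (w₁ ++ w₂) l' u ↔
      ∃ (m : ℕ) (x : G.V m), G.PathW l v w₁ m x ∧ G.PathW m x w₂ l' u := by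
  induction w₁ with
  | nil =>
      refine fun {l l' v u} => ⟨fun h => ⟨l, v, ⟨rfl, rfl⟩, h⟩, ?_⟩
      rintro ⟨m, x, ⟨rfl, rfl⟩, h⟩
      exact h
  | cons a w ih =>
      intro l l' v u
      constructor
      · rintro ⟨e, he, hlab, hp⟩
        obtain ⟨m, x, h₁, h₂⟩ := ih.1 hp
        exact ⟨m, x, ⟨e, he, hlab, h₁⟩, h₂⟩
      · rintro ⟨m, x, ⟨e, he, hlab, h₁⟩, h₂⟩
        exact ⟨e, he, hlab, ih.2 ⟨m, x, h₁, h₂⟩⟩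

theorem exists_edge_iota {l : ℕ} (e : G.E (l + 1)) :
    ∃ f : G.E l, G.src l f = G.iota l (G.src (l + 1) e) ∧
      G.tgt l f = G.iota (l + 1) (G.tgt (l + 1) e) ∧ G.lab l f = G.lab (l + 1) e := by
  have := G.finE l
  have := G.finE (l + 1)
  have hpos : 0 < Nat.card {e' : G.E (l + 1) //
      G.tgt (l + 1) e' = G.tgt (l + 1) e ∧
      G.iota l (G.src (l + 1) e') = G.iota l (G.src (l + 1) e) ∧
      G.lab (l + 1) e' = G.lab (l + 1) e} :=
    Nat.card_pos_iff.2 ⟨⟨⟨e, rfl, rfl, rfl⟩⟩, inferInstance⟩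
  rw [G.local_property] at hpos
  obtain ⟨⟨f, hf⟩⟩ := (Nat.card_pos_iff.1 hpos).1
  exact ⟨f, hf⟩

theorem exists_edge_lift {l : ℕ} (f : G.E l) (t : G.V (l + 2))
    (ht : G.iota (l + 1) t = G.tgt l f) :
    ∃ e : G.E (l + 1), G.tgt (l + 1) e = t ∧
      G.iota l (G.src (l + 1) e) = G.src l f ∧ G.lab (l + 1) e = G.lab l f := by
  have := G.finE l
  have := G.finE (l + 1)
  have hpos : 0 < Nat.card {f' : G.E l //
      G.src l f' = G.src l f ∧ G.tgt l f' = G.iota (l + 1) t ∧ G.lab l f' = G.lab l f} :=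
    Nat.card_pos_iff.2 ⟨⟨⟨f, rfl, ht.symm, rfl⟩⟩, inferInstance⟩
  rw [← G.local_property] at hpos
  obtain ⟨⟨e, he⟩⟩ := (Nat.card_pos_iff.1 hpos).1
  exact ⟨e, he⟩

theorem PathW.iota {w : List A} :
    ∀ {l l' : ℕ} {v : G.V (l + 1)} {u : G.V (l' + 1)}, G.PathW (l + 1) v w (l' + 1) u →
      G.PathW l (G.iota l v) w l' (G.iota l' u) := by
  induction w with
  | nil =>
      rintro l l' v u ⟨hl, rfl⟩
      obtain rfl : l = l' := Nat.succ_injective hl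
      exact ⟨rfl, rfl⟩
  | cons a w ih =>
      rintro l l' v u ⟨e, rfl, rfl, hp⟩
      obtain ⟨f, hsrc, htgt, hlab⟩ := exists_edge_iota e
      exact ⟨f, hsrc, hlab, htgt ▸ ih hp⟩

theorem PathW.iotaN {w : List A} (n : ℕ) :
    ∀ {l l' : ℕ} {v : G.V (l + n)} {u : G.V (l' + n)}, G.PathW (l + n) v w (l' + n) u →
      G.PathW l (G.iotaN l n v) w l' (G.iotaN l' n u) := by
  induction n with
  | zero => exact id
  | succ n ih => exact fun hp => ih hp.iota

theorem PathW.exists_lift {w : List A} :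
    ∀ {l l' : ℕ} {v : G.V l} {u : G.V l'}, G.PathW l v w l' u →
      ∀ u' : G.V (l' + 1), G.iota l' u' = u →
        ∃ v' : G.V (l + 1), G.iota l v' = v ∧ G.PathW (l + 1) v' w (l' + 1) u' := by
  induction w with
  | nil =>
      rintro l l' v u ⟨rfl, rfl⟩ u' hu'
      exact ⟨u', hu', rfl, rfl⟩
  | cons a w ih =>
      rintro l l' v u ⟨e, rfl, rfl, hp⟩ u' hu'
      obtain ⟨x, hx, hpx⟩ := ih hp u' hu'
      obtain ⟨f, htgt, hsrc, hlab⟩ := exists_edge_lift e x hx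
      exact ⟨G.src (l + 1) f, hsrc, f, rfl, hlab, htgt ▸ hpx⟩

theorem LeftResolving.eq_of_pathW (hlr : G.LeftResolving) {w : List A} :
    ∀ {l l' : ℕ} {v x : G.V l} {t : G.V l'},
      G.PathW l v w l' t → G.PathW l x w l' t → v = x := by
  induction w with
  | nil => rintro l l' v x t ⟨rfl, rfl⟩ ⟨-, rfl⟩; rfl
  | cons a w ih =>
      rintro l l' v x t ⟨e, rfl, rfl, hp⟩ ⟨f, rfl, hlab, hpf⟩
      rw [hlr l e f hlab.symm (ih hp hpf)]

theorem Leaves.of_append {l : ℕ} {v : G.V l} {w₁ w₂ : List A}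
    (h : G.Leaves l v (w₁ ++ w₂)) : G.Leaves l v w₁ := by
  obtain ⟨l', u, hp⟩ := h
  obtain ⟨m, x, hp₁, -⟩ := pathW_append_iff.1 hp
  exact ⟨m, x, hp₁⟩

theorem Leaves.iota {l : ℕ} {v : G.V (l + 1)} {w : List A} (h : G.Leaves (l + 1) v w) :
    G.Leaves l (G.iota l v) w := by
  obtain ⟨l', u, hp⟩ := h
  obtain rfl : l' = l + w.length + 1 := by rw [hp.length_eq]; omega
  exact ⟨_, _, hp.iota⟩

theorem Leaves.iotaN {l : ℕ} (n : ℕ) {v : G.V (l + n)} {w : List A}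
    (h : G.Leaves (l + n) v w) : G.Leaves l (G.iotaN l n v) w := by
  obtain ⟨l', u, hp⟩ := h
  obtain rfl : l' = l + w.length + n := by rw [hp.length_eq]; omega
  exact ⟨_, _, hp.iotaN n⟩

theorem Leaves.exists_lift {l : ℕ} {v : G.V l} {w : List A} (h : G.Leaves l v w) :
    ∃ v' : G.V (l + 1), G.iota l v' = v ∧ G.Leaves (l + 1) v' w := by
  obtain ⟨l', u, hp⟩ := h
  obtain ⟨u', hu'⟩ := G.iota_surj l' u
  obtain ⟨v', hv', hp'⟩ := hp.exists_lift u' hu'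
  exact ⟨v', hv', _, _, hp'⟩

theorem Launches.eq_of_leaves_append {l : ℕ} {v x : G.V l} {w r : List A}
    (hv : G.Launches l v w) (hx : G.Leaves l x (w ++ r)) : x = v :=
  hv.2 x hx.of_append

theorem Leaves.exists_leaves_at {k : ℕ} {a : G.V k} {w : List A} (h : G.Leaves k a w) :
    ∀ l, ∃ v : G.V l, G.Leaves l v w := by
  have hzero : ∃ v : G.V 0, G.Leaves 0 v w := by
    induction k with
    | zero => exact ⟨a, h⟩
    | succ k ih => exact ih h.iota
  intro l
  induction l with
  | zero => exact hzero
  | succ l ih =>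
      obtain ⟨v, hv⟩ := ih
      obtain ⟨v', -, hv'⟩ := hv.exists_lift
      exact ⟨v', hv'⟩

theorem Presents.exists_leaves {Λ : Set (ℤ → A)} (hpres : G.Presents Λ) {w : List A}
    (hw : Adm Λ w) (l : ℕ) : ∃ v : G.V l, G.Leaves l v w := by
  obtain ⟨k, a, h⟩ : ∃ (k : ℕ) (a : G.V k), G.Leaves k a w := (hpres w).1 hw
  exact h.exists_leaves_at l

end LGS

theorem iotaIrred_of_irred_general
    (Λ : Set (ℤ → A)) (G : LGS A)
    (hpres : G.Presents Λ) (hlr : G.LeftResolving) (hsync : G.LambdaSyncSys)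
    (hirr : IrredShift Λ) :
    G.IotaIrred := by
  intro l v u w l' t hw
  obtain ⟨η, hη⟩ := hsync l v
  obtain ⟨ν, hν⟩ := hsync l' t
  obtain ⟨lν, tν, hpν⟩ := hν.1
  obtain ⟨ξ, hadm⟩ := hirr η (w ++ ν) ((hpres η).2 ⟨l, v, hη.1⟩)
    ((hpres _).2 ⟨l, u, lν, tν, LGS.pathW_append_iff.2 ⟨l', t, hw, hpν⟩⟩)
  obtain ⟨a, ha⟩ := hpres.exists_leaves hadm l
  obtain rfl : a = v := hη.eq_of_leaves_append (r := ξ ++ (w ++ ν)) (by simpa using ha)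
  obtain ⟨_, _, hp⟩ := ha
  obtain ⟨m, u', hηξ, hwν⟩ := LGS.pathW_append_iff.1 hp
  obtain rfl : m = l + (η ++ ξ).length := hηξ.length_eq
  obtain ⟨m', t', hw', hν'⟩ := LGS.pathW_append_iff.1 hwν
  obtain rfl : m' = l' + (η ++ ξ).length := by rw [hw'.length_eq, hw.length_eq]; omega
  have ht' : G.iotaN l' _ t' = t := hν.2 _ (LGS.Leaves.iotaN _ ⟨_, _, hν'⟩)
  have hu' : G.iotaN l _ u' = u := hlr.eq_of_pathW (ht' ▸ hw'.iotaN _) hw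
  exact ⟨_, η ++ ξ, u', t', hηξ, hu', hw', ht'⟩

/-- a left-resolving `λ`-synchronizing `λ`-graph system presenting an
irreducible subshift is `ι`-irreducible. -/
theorem iotaIrred_of_irred [TopologicalSpace A] [DiscreteTopology A] [Finite A]
    (Λ : Set (ℤ → A)) (hΛ : IsSubshift Λ) (G : LGS A)
    (hpres : G.Presents Λ) (hlr : G.LeftResolving) (hsync : G.LambdaSyncSys)
    (hirr : IrredShift Λ) :
    G.IotaIrred :=
  iotaIrred_of_irred_general Λ G hpres hlr hsync hirr
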